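/- (Generalized Pressure Distribution Principle) Let (X,d,T) be a topological dynamical system, Z ⊆ X a Borel set, ε > 0, s ∈ ℝ, and ψ ∈ C(X). Suppose there exist a sequence of Borel probability measures μ_k, a constant K > 0, and an integer N such that limsup_{k→∞} μ_k(B_n(x,ε)) ≤ K·exp(−ns + Σ_{i=0}^{n-1} ψ(Tⁱx)) for every Bowen ball B_n(x,ε) intersecting Z with n ≥ N, and suppose some weak* limit measure ν of (μ_k) satisfies ν(Z) > 0. Then P(Z, ψ, ε) ≥ s. -/

import Mathlib

/-!
If `t < s` and `M(Z,t,ψ,ε) = 0`, then for every `n ≥ N` the set `Z` is covered by Bowen balls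
`B_m(x,ε)`, `m ≥ n`, of total weight `Σ exp(-tm + sup S_m ψ) < 1`. The portmanteau theorem turns
the limsup bound into `ν(B_m(x,ε)) ≤ K exp(-ms + S_m ψ(x))`, which is at most
`K e^{-n(s-t)}` times the weight of the ball, so `ν(Z) ≤ K e^{-n(s-t)} → 0`. Hence every `t` in
the set defining `P(Z,ψ,ε)` is at least `s`; that set is nonempty because `X` is covered by
`L^m` Bowen balls of length `m`, which makes `M(Z,t,ψ,ε) = 0` once `t` is large.
-/

open MeasureTheory Filter Topology Set

/-- Bowen ball `B_m(x,ε)`. -/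
def bowenBall {X : Type*} [MetricSpace X] (T : X → X) (m : ℕ) (x : X) (ε : ℝ) : Set X :=
  {y | ∀ i < m, dist (T^[i] x) (T^[i] y) < ε}

/-- Birkhoff sum `S_m ψ(x)`. -/
noncomputable def birkSum {X : Type*} (T : X → X) (ψ : X → ℝ) (m : ℕ) (x : X) : ℝ :=
  ∑ i ∈ Finset.range m, ψ (T^[i] x)

/-- `M(Z,t,ψ,n,ε)`: infimum over countable covers of `Z` by Bowen balls `B_m(x,ε)` with
`m ≥ n` of `Σ exp(−tm + sup_{y ∈ B_m(x,ε)} S_m ψ(y))`. -/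
noncomputable def Mpre {X : Type*} [MetricSpace X] (T : X → X) (ψ : X → ℝ) (Z : Set X)
    (t : ℝ) (n : ℕ) (ε : ℝ) : ENNReal :=
  ⨅ (c : ℕ → X × ℕ) (_ : (∀ j, n ≤ (c j).2) ∧ Z ⊆ ⋃ j, bowenBall T (c j).2 (c j).1 ε),
    ∑' j, ENNReal.ofReal (Real.exp (-t * (c j).2 +
      sSup ((birkSum T ψ (c j).2) '' bowenBall T (c j).2 (c j).1 ε)))

/-- `M(Z,t,ψ,ε) = lim_{n→∞} M(Z,t,ψ,n,ε)` (the quantity is monotone in `n`). -/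
noncomputable def Mlim {X : Type*} [MetricSpace X] (T : X → X) (ψ : X → ℝ) (Z : Set X)
    (t : ℝ) (ε : ℝ) : ENNReal :=
  ⨆ n : ℕ, Mpre T ψ Z t n ε

/-- Topological pressure of `Z` at scale `ε`: the critical value of `t`. -/
noncomputable def pressEps {X : Type*} [MetricSpace X] (T : X → X) (ψ : X → ℝ) (Z : Set X)
    (ε : ℝ) : ℝ :=
  sInf {t : ℝ | Mlim T ψ Z t ε = 0}

/-- Topological pressure `P(Z,ψ) = lim_{ε→0} P(Z,ψ,ε)` (the scale pressure is antitone
in `ε`, so the limit is the supremum over `ε > 0`). -/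
noncomputable def press {X : Type*} [MetricSpace X] (T : X → X) (ψ : X → ℝ) (Z : Set X) : ℝ :=
  ⨆ ε : {e : ℝ // 0 < e}, pressEps T ψ Z ε

open scoped ENNReal

lemma ENNReal.eq_zero_of_forall_le_mul_pow {a c r : ℝ≥0∞} (hc : c ≠ ⊤) (hr : r < 1) {N : ℕ}
    (h : ∀ n ≥ N, a ≤ c * r ^ n) : a = 0 := by
  have hlim : Tendsto (fun n => c * r ^ n) atTop (𝓝 0) := by
    simpa using ENNReal.Tendsto.const_mul (ENNReal.tendsto_pow_atTop_nhds_zero_of_lt_one hr)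
      (Or.inr hc)
  exact nonpos_iff_eq_zero.1 (ge_of_tendsto hlim (eventually_atTop.2 ⟨N, h⟩))

lemma MeasureTheory.measure_le_tsum_of_subset_iUnion {α ι : Type*} [MeasurableSpace α] [Countable ι]
    (ν : Measure α) {Z : Set α} {B : ι → Set α} (hZ : Z ⊆ ⋃ j, B j) {w : ι → ℝ≥0∞}
    (hw : ∀ j, (B j ∩ Z).Nonempty → ν (B j) ≤ w j) : ν Z ≤ ∑' j, w j := by
  have hZ' : Z ⊆ ⋃ j, B j ∩ Z := fun y hy => by
    obtain ⟨j, hj⟩ := mem_iUnion.1 (hZ hy)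
    exact mem_iUnion.2 ⟨j, hj, hy⟩
  refine (measure_mono hZ').trans ((measure_iUnion_le _).trans (ENNReal.tsum_le_tsum fun j => ?_))
  rcases (B j ∩ Z).eq_empty_or_nonempty with h | h
  · simp [h]
  · exact (measure_mono inter_subset_left).trans (hw j h)

lemma MeasureTheory.measure_le_limsup_of_tendsto_integral {Ω : Type*} [TopologicalSpace Ω]
    [MeasurableSpace Ω] [OpensMeasurableSpace Ω] [HasOuterApproxClosed Ω]
    {μ : ℕ → Measure Ω} [∀ i, IsProbabilityMeasure (μ i)] {ν : Measure Ω} [IsProbabilityMeasure ν]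
    {k : ℕ → ℕ} (hk : Tendsto k atTop atTop)
    (hlim : ∀ f : C(Ω, ℝ), Tendsto (fun j => ∫ x, f x ∂(μ (k j))) atTop (𝓝 (∫ x, f x ∂ν)))
    {U : Set Ω} (hU : IsOpen U) :
    ν U ≤ limsup (fun i => μ i U) atTop := by
  let P : ℕ → ProbabilityMeasure Ω := fun j => ⟨μ (k j), inferInstance⟩
  have hP : Tendsto P atTop (𝓝 ⟨ν, inferInstance⟩) :=
    ProbabilityMeasure.tendsto_iff_forall_integral_tendsto.2 fun f => hlim f.toContinuousMap
  calc ν U ≤ liminf (fun j => μ (k j) U) atTop :=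
        ProbabilityMeasure.le_liminf_measure_open_of_tendsto hP hU
    _ ≤ limsup (fun j => μ (k j) U) atTop := liminf_le_limsup
    _ ≤ limsup (fun i => μ i U) atTop := hk.limsup_comp_le_limsup (u := fun i => μ i U)

lemma birkSum_le_mul {X : Type*} {T : X → X} {ψ : X → ℝ} {C : ℝ} (hC : ∀ x, ψ x ≤ C) (m : ℕ)
    (x : X) : birkSum T ψ m x ≤ m * C := by
  simpa [birkSum] using Finset.sum_le_sum fun i (_ : i ∈ Finset.range m) => hC (T^[i] x)

section Pressure

variable {X : Type*} [MetricSpace X] {T : X → X} {ψ : X → ℝ} {Z : Set X} {ε t : ℝ}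

/-- The summand of `Mpre` attached to the Bowen ball `B_{p.2}(p.1, ε)`. -/
noncomputable def bowenWeight (T : X → X) (ψ : X → ℝ) (t ε : ℝ) (p : X × ℕ) : ℝ≥0∞ :=
  ENNReal.ofReal (Real.exp (-t * p.2 + sSup (birkSum T ψ p.2 '' bowenBall T p.2 p.1 ε)))

lemma isOpen_bowenBall (hT : Continuous T) (m : ℕ) (x : X) (ε : ℝ) :
    IsOpen (bowenBall T m x ε) := by
  have h : bowenBall T m x ε = ⋂ i ∈ Finset.range m, T^[i] ⁻¹' Metric.ball (T^[i] x) ε := by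
    ext y
    simp [bowenBall, Metric.mem_ball, dist_comm]
  rw [h]
  exact isOpen_biInter_finset fun i _ => Metric.isOpen_ball.preimage (hT.iterate i)

lemma mem_bowenBall_self (hε : 0 < ε) (m : ℕ) (x : X) : x ∈ bowenBall T m x ε :=
  fun i _ => by simpa using hε

lemma birkSum_le_sSup_image (hψ : BddAbove (range ψ)) (hε : 0 < ε) (m : ℕ) (x : X) :
    birkSum T ψ m x ≤ sSup (birkSum T ψ m '' bowenBall T m x ε) := by
  obtain ⟨C, hC⟩ := hψ
  refine le_csSup ⟨m * C, ?_⟩ (mem_image_of_mem _ (mem_bowenBall_self hε m x))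
  rintro _ ⟨y, -, rfl⟩
  exact birkSum_le_mul (fun x => hC (mem_range_self x)) m y

lemma bowenWeight_le_pow {C : ℝ} (hC : ∀ x, ψ x ≤ C) (hε : 0 < ε) (x : X) (m : ℕ) :
    bowenWeight T ψ t ε (x, m) ≤ ENNReal.ofReal (Real.exp (C - t)) ^ m := by
  have hsup : sSup (birkSum T ψ m '' bowenBall T m x ε) ≤ m * C :=
    csSup_le ((nonempty_of_mem (mem_bowenBall_self hε m x)).image _)
      (by rintro _ ⟨y, -, rfl⟩; exact birkSum_le_mul hC m y)
  rw [bowenWeight, ← ENNReal.ofReal_pow (Real.exp_nonneg _), ← Real.exp_nat_mul]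
  gcongr
  linarith

lemma ofReal_exp_le_pow_mul_bowenWeight (hψ : BddAbove (range ψ)) (hε : 0 < ε) {s : ℝ}
    (hts : t ≤ s) {n m : ℕ} (hnm : n ≤ m) (x : X) :
    ENNReal.ofReal (Real.exp (-m * s + birkSum T ψ m x))
      ≤ ENNReal.ofReal (Real.exp (t - s)) ^ n * bowenWeight T ψ t ε (x, m) := by
  rw [bowenWeight, ← ENNReal.ofReal_pow (Real.exp_nonneg _), ← Real.exp_nat_mul,
    ← ENNReal.ofReal_mul (Real.exp_nonneg _), ← Real.exp_add]
  refine ENNReal.ofReal_le_ofReal (Real.exp_le_exp.2 ?_)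
  have hS := birkSum_le_sSup_image (T := T) hψ hε m x
  have hnm' : (n : ℝ) ≤ m := by exact_mod_cast hnm
  nlinarith

lemma Mpre_le_tsum {n : ℕ} (c : ℕ → X × ℕ) (hlen : ∀ j, n ≤ (c j).2)
    (hcov : Z ⊆ ⋃ j, bowenBall T (c j).2 (c j).1 ε) :
    Mpre T ψ Z t n ε ≤ ∑' j, bowenWeight T ψ t ε (c j) :=
  iInf₂_le c ⟨hlen, hcov⟩

lemma exists_tsum_lt_of_Mpre_lt {n : ℕ} {a : ℝ≥0∞} (h : Mpre T ψ Z t n ε < a) :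
    ∃ c : ℕ → X × ℕ, ((∀ j, n ≤ (c j).2) ∧ Z ⊆ ⋃ j, bowenBall T (c j).2 (c j).1 ε) ∧
      ∑' j, bowenWeight T ψ t ε (c j) < a := by
  simpa only [Mpre, iInf_lt_iff, exists_prop, bowenWeight] using h

/-- A finite cover by balls of length `m` is padded to a countable one by balls of lengths
`m + j`, whose total weight is at most `2 * 2⁻¹ ^ m`. -/
lemma Mpre_le_sum_add_of_cover {n m : ℕ} (hnm : n ≤ m)
    (hw : ∀ x m', bowenWeight T ψ t ε (x, m') ≤ 2⁻¹ ^ m')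
    {f : ℕ → X} {p : ℕ} (hcov : ∀ y ∈ Z, ∃ j < p, y ∈ bowenBall T m (f j) ε) :
    Mpre T ψ Z t n ε ≤ ∑ j ∈ Finset.range p, bowenWeight T ψ t ε (f j, m) + 2 * 2⁻¹ ^ m := by
  let c : ℕ → X × ℕ := fun j => (f j, if j < p then m else m + j)
  have hlen : ∀ j, n ≤ (c j).2 := fun j => by dsimp only [c]; split <;> omega
  have hcov' : Z ⊆ ⋃ j, bowenBall T (c j).2 (c j).1 ε := fun y hy => by
    obtain ⟨j, hj, hyj⟩ := hcov y hy
    exact mem_iUnion.2 ⟨j, by simpa [c, hj] using hyj⟩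
  have hterm : ∀ j, bowenWeight T ψ t ε (c j)
      ≤ (if j < p then bowenWeight T ψ t ε (f j, m) else 0) + 2⁻¹ ^ m * 2⁻¹ ^ j := by
    intro j
    by_cases hj : j < p
    · simp [c, hj]
    · simpa [c, hj, pow_add] using hw (f j) (m + j)
  calc Mpre T ψ Z t n ε ≤ ∑' j, bowenWeight T ψ t ε (c j) := Mpre_le_tsum c hlen hcov'
    _ ≤ ∑' j, ((if j < p then bowenWeight T ψ t ε (f j, m) else 0) + 2⁻¹ ^ m * 2⁻¹ ^ j) :=
        ENNReal.tsum_le_tsum hterm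
    _ = ∑ j ∈ Finset.range p, bowenWeight T ψ t ε (f j, m) + 2 * 2⁻¹ ^ m := by
        rw [ENNReal.tsum_add, ENNReal.tsum_mul_left, ENNReal.tsum_geometric_two, mul_comm,
          tsum_eq_sum (s := Finset.range p) (fun j hj => if_neg (by simpa using hj))]
        exact congrArg (· + _) (Finset.sum_congr rfl fun j hj => if_pos (Finset.mem_range.1 hj))

lemma exists_bowenBall_cover [CompactSpace X] [Nonempty X] (T : X → X) (hε : 0 < ε) :
    ∃ L : ℕ, ∀ m, ∃ f : ℕ → X, ∀ y, ∃ j < L ^ m, y ∈ bowenBall T m (f j) ε := by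
  obtain ⟨V, hV, _, hVε⟩ := comp_symm_mem_uniformity_sets (Metric.dist_mem_uniformity (α := X) hε)
  obtain ⟨s, hs⟩ := Dynamics.exists_isDynCoverOf_of_isCompact_invariant (T := T) isCompact_univ
    (mapsTo_univ T univ) hV 1
  refine ⟨s.card, fun m => ?_⟩
  obtain ⟨u, hu, hcard⟩ := hs.iterate_le_pow (mapsTo_univ T univ) m
  rw [one_mul] at hu
  refine ⟨fun j => u.toList.getD j (Classical.arbitrary X), fun y => ?_⟩
  obtain ⟨x, hxu, hyx⟩ := hu (mem_univ y)
  obtain ⟨j, hj, rfl⟩ := List.mem_iff_getElem.1 (Finset.mem_toList.2 hxu)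
  refine ⟨j, (Finset.length_toList u ▸ hj).trans_le hcard, fun i hi => ?_⟩
  beta_reduce
  rw [List.getD_eq_getElem _ _ hj, dist_comm]
  exact hVε (Dynamics.mem_dynEntourage.1 hyx i hi)

lemma exists_Mlim_eq_zero [CompactSpace X] [Nonempty X] (T : X → X) (hψ : BddAbove (range ψ))
    (Z : Set X) (hε : 0 < ε) : ∃ t, Mlim T ψ Z t ε = 0 := by
  obtain ⟨L, hL⟩ := exists_bowenBall_cover T hε
  obtain ⟨C, hC⟩ := hψ
  replace hC : ∀ x, ψ x ≤ C := fun x => hC (mem_range_self x)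
  obtain ⟨t, ht⟩ : ∃ t, ((L : ℝ≥0∞) + 1) * ENNReal.ofReal (Real.exp (C - t)) ≤ 2⁻¹ := by
    have hexp : Tendsto (fun t => ENNReal.ofReal (Real.exp (C - t))) atTop (𝓝 0) := by
      have hC_sub : Tendsto (fun t => C + -t) atTop atBot :=
        tendsto_atBot_add_const_left atTop C tendsto_neg_atTop_atBot
      simpa [Function.comp_def, ← sub_eq_add_neg] using
        ENNReal.tendsto_ofReal (Real.tendsto_exp_atBot.comp hC_sub)
    have hlim : Tendsto (fun t => ((L : ℝ≥0∞) + 1) * ENNReal.ofReal (Real.exp (C - t))) atTop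
        (𝓝 (((L : ℝ≥0∞) + 1) * 0)) := ENNReal.Tendsto.const_mul hexp (Or.inr (by simp))
    rw [mul_zero] at hlim
    exact (hlim.eventually (ge_mem_nhds (by simp))).exists
  set r := ENNReal.ofReal (Real.exp (C - t))
  have hr : r ≤ 2⁻¹ := (le_mul_of_one_le_left' le_add_self).trans ht
  have hLr : (L : ℝ≥0∞) * r ≤ 2⁻¹ := (mul_le_mul_left le_self_add r).trans ht
  have hw : ∀ x m, bowenWeight T ψ t ε (x, m) ≤ 2⁻¹ ^ m :=
    fun x m => (bowenWeight_le_pow hC hε x m).trans (pow_le_pow_left' hr m)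
  refine ⟨t, ENNReal.iSup_eq_zero.2 fun n => ?_⟩
  refine ENNReal.eq_zero_of_forall_le_mul_pow (c := 3) (r := 2⁻¹) (N := n) (by simp) (by norm_num)
    fun m hm => ?_
  obtain ⟨f, hf⟩ := hL m
  calc Mpre T ψ Z t n ε ≤ ∑ j ∈ Finset.range (L ^ m), bowenWeight T ψ t ε (f j, m) + 2 * 2⁻¹ ^ m :=
        Mpre_le_sum_add_of_cover hm hw fun y _ => hf y
    _ ≤ ∑ j ∈ Finset.range (L ^ m), r ^ m + 2 * 2⁻¹ ^ m := by
        gcongr with j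
        exact bowenWeight_le_pow hC hε _ _
    _ = (L * r) ^ m + 2 * 2⁻¹ ^ m := by simp [mul_pow]
    _ ≤ 2⁻¹ ^ m + 2 * 2⁻¹ ^ m := by gcongr
    _ = 3 * 2⁻¹ ^ m := by ring

lemma measure_eq_zero_of_Mlim_eq_zero [MeasurableSpace X] {ν : Measure X}
    (hψ : BddAbove (range ψ)) (hε : 0 < ε) {s : ℝ} (hts : t < s) {c : ℝ≥0∞} (hc : c ≠ ⊤) {N : ℕ}
    (hball : ∀ x m, N ≤ m → (bowenBall T m x ε ∩ Z).Nonempty →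
      ν (bowenBall T m x ε) ≤ c * ENNReal.ofReal (Real.exp (-m * s + birkSum T ψ m x)))
    (hM : Mlim T ψ Z t ε = 0) : ν Z = 0 := by
  set q := ENNReal.ofReal (Real.exp (t - s))
  have hq : q < 1 := ENNReal.ofReal_lt_one.2 (Real.exp_lt_one_iff.2 (by linarith))
  refine ENNReal.eq_zero_of_forall_le_mul_pow hc hq (N := N) fun n hn => ?_
  obtain ⟨cov, ⟨hlen, hcov⟩, hsum⟩ :=
    exists_tsum_lt_of_Mpre_lt ((ENNReal.iSup_eq_zero.1 hM n).trans_lt one_pos)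
  calc ν Z ≤ ∑' j, c * q ^ n * bowenWeight T ψ t ε (cov j) := by
        refine measure_le_tsum_of_subset_iUnion ν hcov fun j hj => ?_
        rw [mul_assoc]
        exact (hball _ _ (hn.trans (hlen j)) hj).trans
          (mul_le_mul_right (ofReal_exp_le_pow_mul_bowenWeight hψ hε hts.le (hlen j) _) c)
    _ = c * q ^ n * ∑' j, bowenWeight T ψ t ε (cov j) := ENNReal.tsum_mul_left
    _ ≤ c * q ^ n := mul_le_of_le_one_right' hsum.le

end Pressure

theorem generalized_pressure_distribution_principle_general {X : Type*} [MetricSpace X]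
    [CompactSpace X] [MeasurableSpace X] [BorelSpace X]
    (T : X → X) (hT : Continuous T) (ψ : X → ℝ) (hψ : Continuous ψ)
    (Z : Set X) (ε : ℝ) (hε : 0 < ε) (s : ℝ)
    (μ : ℕ → Measure X) (hprob : ∀ k, IsProbabilityMeasure (μ k))
    (K : ℝ) (N : ℕ)
    (hbound : ∀ (x : X) (n : ℕ), N ≤ n → (bowenBall T n x ε ∩ Z).Nonempty →
      limsup (fun k => μ k (bowenBall T n x ε)) atTop
        ≤ ENNReal.ofReal (K * Real.exp (-(n : ℝ) * s + birkSum T ψ n x)))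
    (ν : Measure X) (hν : IsProbabilityMeasure ν)
    (k : ℕ → ℕ) (hk : StrictMono k)
    (hlim : ∀ f : C(X, ℝ),
      Tendsto (fun j => ∫ x, f x ∂(μ (k j))) atTop (nhds (∫ x, f x ∂ν)))
    (hνZ : 0 < ν Z) :
    s ≤ pressEps T ψ Z ε := by
  have : Nonempty X := (nonempty_of_measure_ne_zero hνZ.ne').nonempty
  have hψ' : BddAbove (range ψ) := (isCompact_range hψ).bddAbove
  obtain ⟨t₀, ht₀⟩ := exists_Mlim_eq_zero T hψ' Z hε
  refine le_csInf ⟨t₀, ht₀⟩ fun t ht => not_lt.1 fun hts => hνZ.ne' ?_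
  refine measure_eq_zero_of_Mlim_eq_zero (c := ENNReal.ofReal K) (N := N) hψ' hε hts
    ENNReal.ofReal_ne_top (fun x m hm hZm => ?_) ht
  calc ν (bowenBall T m x ε) ≤ limsup (fun i => μ i (bowenBall T m x ε)) atTop :=
        measure_le_limsup_of_tendsto_integral hk.tendsto_atTop hlim (isOpen_bowenBall hT m x ε)
    _ ≤ _ := hbound x m hm hZm
    _ = _ := ENNReal.ofReal_mul' (Real.exp_nonneg _)

/-- Generalized Pressure Distribution Principle: if a sequence of Borel probability
measures `μ k` satisfies `limsup_k μ_k(B_n(x,ε)) ≤ K exp(−ns + S_n ψ(x))` for every Bowen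
ball meeting `Z` with `n ≥ N`, and some weak* limit `ν` of the sequence gives `Z` positive
measure, then `P(Z,ψ,ε) ≥ s`. -/
theorem generalized_pressure_distribution_principle {X : Type*} [MetricSpace X]
    [CompactSpace X] [MeasurableSpace X] [BorelSpace X]
    (T : X → X) (hT : Continuous T) (ψ : X → ℝ) (hψ : Continuous ψ)
    (Z : Set X) (hZ : MeasurableSet Z) (ε : ℝ) (hε : 0 < ε) (s : ℝ)
    (μ : ℕ → Measure X) (hprob : ∀ k, IsProbabilityMeasure (μ k))
    (K : ℝ) (hK : 0 < K) (N : ℕ)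
    (hbound : ∀ (x : X) (n : ℕ), N ≤ n → (bowenBall T n x ε ∩ Z).Nonempty →
      limsup (fun k => μ k (bowenBall T n x ε)) atTop
        ≤ ENNReal.ofReal (K * Real.exp (-(n : ℝ) * s + birkSum T ψ n x)))
    (ν : Measure X) (hν : IsProbabilityMeasure ν)
    (k : ℕ → ℕ) (hk : StrictMono k)
    (hlim : ∀ f : C(X, ℝ),
      Tendsto (fun j => ∫ x, f x ∂(μ (k j))) atTop (nhds (∫ x, f x ∂ν)))
    (hνZ : 0 < ν Z) :
    s ≤ pressEps T ψ Z ε :=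
  generalized_pressure_distribution_principle_general T hT ψ hψ Z ε hε s μ hprob K N hbound ν hν k
    hk hlim hνZ
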